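/- Let d ≥ 2, n ≥ 2d, and let μ, ν be partitions of n. Then there exist a constant C > 0 and δ ∈ (0,1) such that for all q ∈ (0, δ): | H^d_q(μ, ν) − q^d Σ_{μ^{(1)}: ℓ*(μ^{(1)}) = d} H(μ^{(1)}, μ, ν) − q^{d+1} Σ_{(μ^{(1)}, μ^{(2)}): ℓ*(μ^{(1)}) = d−1, ℓ*(μ^{(2)}) = 1} H(μ^{(1)}, μ^{(2)}, μ, ν) | ≤ C · q^{d+2}, where the first sum runs over partitions μ^{(1)} of n with colength d and the second over ordered pairs of partitions of n with the indicated colengths. -/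

import Mathlib

open scoped Classical

/-- The colength `ℓ*(μ) = |μ| - ℓ(μ)` of a partition `μ` of `n`. -/
def colen {n : ℕ} (P : Nat.Partition n) : ℕ := n - Multiset.card P.parts

/-- `𝔐^{(n)}_{d,k}`: the set of `k`-tuples `(μ⁽¹⁾, …, μ⁽ᵏ⁾)` of partitions of `n` with
`ℓ*(μ⁽ʲ⁾) ≥ 1` for all `j` and `Σⱼ ℓ*(μ⁽ʲ⁾) = d`. -/
noncomputable def Mset (n d k : ℕ) : Finset (Fin k → Nat.Partition n) :=
  Finset.univ.filter (fun T => (∀ j, 1 ≤ colen (T j)) ∧ ∑ j, colen (T j) = d)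

/-- The weight `W_q(μ⁽¹⁾, …, μ⁽ᵏ⁾) = ∏ⱼ q^{Tⱼ}/(1 - q^{Tⱼ})`, with
`Tⱼ = ℓ*(μ⁽¹⁾) + … + ℓ*(μ⁽ʲ⁾)`. -/
noncomputable def Wq (q : ℝ) {n k : ℕ} (T : Fin k → Nat.Partition n) : ℝ :=
  ∏ j : Fin k,
    (q ^ (∑ i ∈ Finset.univ.filter (fun i => i ≤ j), colen (T i)) /
      (1 - q ^ (∑ i ∈ Finset.univ.filter (fun i => i ≤ j), colen (T i))))

/-- The Hurwitz number `H(μ⁽¹⁾, …, μ⁽ᵐ⁾)`: the number of `m`-tuples `(h₁, …, h_m)` of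
permutations in `S_n` with `h₁h₂⋯h_m = id` and the cycle type of `hᵢ` equal to `μ⁽ⁱ⁾`
for each `i`, divided by `n!`. -/
noncomputable def Hur {n m : ℕ} (M : Fin m → Nat.Partition n) : ℚ :=
  (Nat.card {h : Fin m → Equiv.Perm (Fin n) //
      (List.ofFn h).prod = 1 ∧ ∀ i, (h i).partition.parts = (M i).parts} : ℚ)
    / (n.factorial : ℚ)

/-- The quantum weighted double Hurwitz number
`H^d_q(μ,ν) = Σ_{k=1}^d Σ_{T ∈ 𝔐^{(n)}_{d,k}} W_q(T)·H(T, μ, ν)`. -/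
noncomputable def Hdq (q : ℝ) (d : ℕ) {n : ℕ} (μ ν : Nat.Partition n) : ℝ :=
  ∑ k ∈ Finset.Icc 1 d, ∑ T ∈ Mset n d k,
    Wq q T * ((Hur (Fin.snoc (Fin.snoc T μ) ν) : ℚ) : ℝ)

/-! With `T_j` the partial colength sums and `E = Σⱼ T_j`, the weight is
`W_q = q^E ∏ⱼ (1 - q^{T_j})⁻¹`, and since every `T_j ≥ T_1 = ℓ*(μ⁽¹⁾) ≥ 1` the product is
`1 + O(q^{T_1})`. On `𝔐^{(n)}_{d,k}` one has `T_k = d` and `E ≥ d + k - 1`, and `E + T_1 ≥ d + 2`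
because `d ≥ 2`. So below order `q^{d+2}` only `k = 1` (weight `q^d + O(q^{2d})`) and `k = 2` with
`ℓ*(μ⁽¹⁾) = 1` (weight `q^{d+1} + O(q^{d+2})`) survive. The second family is the stated double sum
with the two partitions exchanged, and `H(A, B, …) = H(B, A, …)` via the bijection
`(h₁, h₂, …) ↦ (h₁h₂h₁⁻¹, h₁, …)`. -/

open Asymptotics Filter Topology Finset

lemma inv_one_sub_pow_sub_one_le {x : ℝ} (hx0 : 0 ≤ x) (hx : x ≤ 1 / 2) (k : ℕ) :
    ((1 - x) ^ k)⁻¹ - 1 ≤ k * 2 ^ k * x := by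
  have hbern : 1 - k * x ≤ (1 - x) ^ k := by
    simpa [sub_eq_add_neg] using one_add_mul_le_pow (a := -x) (by linarith) k
  have hhalf : (1 / 2 : ℝ) ^ k ≤ (1 - x) ^ k := pow_le_pow_left₀ (by norm_num) (by linarith) k
  have hpos : 0 < (1 - x) ^ k := lt_of_lt_of_le (by positivity) hhalf
  calc ((1 - x) ^ k)⁻¹ - 1 = (1 - (1 - x) ^ k) / (1 - x) ^ k := by field_simp
    _ ≤ k * x / (1 / 2) ^ k := by gcongr; linarith
    _ = k * 2 ^ k * x := by rw [one_div, inv_pow, div_inv_eq_mul]; ring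

lemma abs_prod_pow_div_one_sub_pow_sub_le {ι : Type*} (s : Finset ι) (e : ι → ℕ) {m : ℕ}
    (hm : 1 ≤ m) (he : ∀ i ∈ s, m ≤ e i) {q : ℝ} (hq0 : 0 < q) (hq : q ≤ 1 / 2) :
    |∏ i ∈ s, q ^ e i / (1 - q ^ e i) - q ^ ∑ i ∈ s, e i| ≤
      #s * 2 ^ #s * q ^ (∑ i ∈ s, e i + m) := by
  have hq1 : q ≤ 1 := by linarith
  have hqm : q ^ m ≤ 1 / 2 := (pow_le_of_le_one hq0.le hq1 (by omega)).trans hq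
  have hlo : ∀ i ∈ s, 1 - q ^ m ≤ 1 - q ^ e i := fun i hi =>
    sub_le_sub_left (pow_le_pow_of_le_one hq0.le hq1 (he i hi)) 1
  have hhi : ∀ i ∈ s, 1 - q ^ e i ≤ 1 := fun i _ => sub_le_self 1 (by positivity)
  have hnonneg : ∀ i ∈ s, 0 ≤ 1 - q ^ e i := fun i hi => by linarith [hlo i hi]
  set E := ∑ i ∈ s, e i
  set P := ∏ i ∈ s, (1 - q ^ e i)
  have hPlo : (1 - q ^ m) ^ #s ≤ P := by
    simpa using prod_le_prod (fun _ _ => by linarith) hlo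
  have hP0 : 0 < (1 - q ^ m) ^ #s := pow_pos (by linarith) _
  have hP1 : P ≤ 1 := prod_le_one hnonneg hhi
  have heq : ∏ i ∈ s, q ^ e i / (1 - q ^ e i) - q ^ ∑ i ∈ s, e i =
      q ^ E * (P⁻¹ - 1) := by
    rw [prod_div_distrib, prod_pow_eq_pow_sum, div_eq_mul_inv, mul_sub, mul_one]
  rw [heq, abs_of_nonneg (mul_nonneg (by positivity)
    (sub_nonneg.2 (one_le_inv₀ (hP0.trans_le hPlo) |>.2 hP1)))]
  calc q ^ E * (P⁻¹ - 1) ≤ q ^ E * (((1 - q ^ m) ^ #s)⁻¹ - 1) := by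
        gcongr
    _ ≤ q ^ E * (#s * 2 ^ #s * q ^ m) := by
        gcongr
        exact inv_one_sub_pow_sub_one_le (by positivity) hqm _
    _ = #s * 2 ^ #s * q ^ (E + m) := by ring

lemma isBigO_pow_pow_nhdsGT {a b : ℕ} (h : a ≤ b) :
    (fun q : ℝ => q ^ b) =O[𝓝[>] 0] fun q => q ^ a := by
  refine IsBigO.of_bound 1 ?_
  filter_upwards [Ioo_mem_nhdsGT (show (0 : ℝ) < 1 by norm_num)] with q hq
  simp only [norm_pow, Real.norm_eq_abs, abs_of_pos hq.1, one_mul]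
  exact pow_le_pow_of_le_one hq.1.le hq.2.le h

lemma isBigO_prod_pow_div_one_sub_pow_sub {ι : Type*} (s : Finset ι) (e : ι → ℕ) {m : ℕ}
    (hm : 1 ≤ m) (he : ∀ i ∈ s, m ≤ e i) :
    (fun q : ℝ => ∏ i ∈ s, q ^ e i / (1 - q ^ e i) - q ^ ∑ i ∈ s, e i) =O[𝓝[>] 0]
      fun q => q ^ (∑ i ∈ s, e i + m) := by
  refine IsBigO.of_bound (#s * 2 ^ #s) ?_
  filter_upwards [Ioo_mem_nhdsGT (show (0 : ℝ) < 1 / 2 by norm_num)] with q hq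
  rw [Real.norm_eq_abs, Real.norm_eq_abs, abs_of_pos (pow_pos hq.1 _)]
  exact abs_prod_pow_div_one_sub_pow_sub_le s e hm he hq.1 hq.2.le

lemma exists_pos_bound_of_isBigO_nhdsGT {f : ℝ → ℝ} {N : ℕ}
    (h : f =O[𝓝[>] 0] fun q => q ^ N) :
    ∃ C : ℝ, 0 < C ∧ ∃ δ ∈ Set.Ioo (0 : ℝ) 1, ∀ q ∈ Set.Ioo (0 : ℝ) δ, |f q| ≤ C * q ^ N := by
  obtain ⟨c, hc⟩ := isBigO_iff.1 h
  obtain ⟨δ, hδ0, hδ⟩ := (nhdsGT_basis (0 : ℝ)).eventually_iff.1 hc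
  refine ⟨max c 1, by positivity, min δ (1 / 2), ⟨by positivity, by norm_num⟩, fun q hq => ?_⟩
  have hfq := hδ ⟨hq.1, hq.2.trans_le (min_le_left _ _)⟩
  rw [Real.norm_eq_abs, norm_pow, Real.norm_eq_abs, abs_of_pos hq.1] at hfq
  exact hfq.trans (mul_le_mul_of_nonneg_right (le_max_left _ _) (pow_pos hq.1 _).le)

def partialColen {n k : ℕ} (T : Fin k → Nat.Partition n) (j : Fin k) : ℕ :=
  ∑ i ∈ univ.filter (fun i => i ≤ j), colen (T i)

def wqExponent {n k : ℕ} (T : Fin k → Nat.Partition n) : ℕ := ∑ j, partialColen T j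

lemma mem_Mset {n d k : ℕ} {T : Fin k → Nat.Partition n} :
    T ∈ Mset n d k ↔ (∀ j, 1 ≤ colen (T j)) ∧ ∑ j, colen (T j) = d := by
  simp [Mset]

section PartialColen

variable {n d k : ℕ} {T : Fin (k + 1) → Nat.Partition n}

lemma colen_zero_le_partialColen (T : Fin (k + 1) → Nat.Partition n) (j : Fin (k + 1)) :
    colen (T 0) ≤ partialColen T j :=
  single_le_sum (f := fun i => colen (T i)) (fun _ _ => Nat.zero_le _) (by simp)

lemma partialColen_zero (T : Fin (k + 1) → Nat.Partition n) : partialColen T 0 = colen (T 0) := by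
  simp [partialColen, filter_eq']

lemma partialColen_last (hT : T ∈ Mset n d (k + 1)) : partialColen T (Fin.last k) = d := by
  simpa [partialColen, Fin.le_last] using (mem_Mset.1 hT).2

lemma add_le_wqExponent (hT : T ∈ Mset n d (k + 1)) : d + k ≤ wqExponent T := by
  have hpos : ∀ j ∈ (univ : Finset (Fin k)), 1 ≤ partialColen T j.castSucc := fun j _ =>
    ((mem_Mset.1 hT).1 0).trans (colen_zero_le_partialColen T _)
  have := card_nsmul_le_sum _ _ 1 hpos
  rw [wqExponent, Fin.sum_univ_castSucc, partialColen_last hT]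
  simp only [card_univ, Fintype.card_fin, smul_eq_mul, mul_one] at this
  omega

end PartialColen

def leadingWeight (q : ℝ) (d : ℕ) {n : ℕ} : {k : ℕ} → (Fin k → Nat.Partition n) → ℝ
  | 1, _ => q ^ d
  | 2, T => if colen (T 0) = 1 then q ^ (d + 1) else 0
  | _, _ => 0

lemma leadingWeight_eq_zero (q : ℝ) (d : ℕ) {n k : ℕ} (T : Fin k → Nat.Partition n)
    (h1 : k ≠ 1) (h2 : k ≠ 2) : leadingWeight q d T = 0 := by
  unfold leadingWeight
  split <;> simp_all

section Asymptotics

variable {n d k : ℕ} {T : Fin (k + 1) → Nat.Partition n}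

lemma isBigO_Wq_sub_pow (h : 1 ≤ colen (T 0)) :
    (fun q => Wq q T - q ^ wqExponent T) =O[𝓝[>] 0]
      fun q => q ^ (wqExponent T + colen (T 0)) :=
  isBigO_prod_pow_div_one_sub_pow_sub univ _ h fun j _ => colen_zero_le_partialColen T j

lemma isBigO_Wq {N : ℕ} (h : 1 ≤ colen (T 0)) (hN : N ≤ wqExponent T) :
    (fun q => Wq q T) =O[𝓝[>] 0] fun q => q ^ N := by
  simpa using ((isBigO_Wq_sub_pow h).trans (isBigO_pow_pow_nhdsGT (by omega))).add
    (isBigO_pow_pow_nhdsGT hN)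

theorem isBigO_Wq_sub_leadingWeight (hd : 2 ≤ d) (hT : T ∈ Mset n d (k + 1)) :
    (fun q => Wq q T - leadingWeight q d T) =O[𝓝[>] 0] fun q => q ^ (d + 2) := by
  have hc0 : 1 ≤ colen (T 0) := (mem_Mset.1 hT).1 0
  have hE := add_le_wqExponent hT
  have hlast := partialColen_last hT
  rcases k with _ | _ | k
  · have hEd : wqExponent T = d := by simpa [wqExponent] using hlast
    have hcd : colen (T 0) = d := by rw [← partialColen_zero]; exact hlast
    have := isBigO_Wq_sub_pow hc0
    rw [hEd, hcd] at this
    exact this.trans (isBigO_pow_pow_nhdsGT (by omega))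
  · have hEd : wqExponent T = colen (T 0) + d := by
      rw [wqExponent, Fin.sum_univ_two, partialColen_zero, ← hlast]; rfl
    change (fun q => Wq q T - if colen (T 0) = 1 then q ^ (d + 1) else 0) =O[𝓝[>] 0] _
    split_ifs with h1
    · have := isBigO_Wq_sub_pow hc0
      rw [hEd, h1, add_comm 1 d] at this
      exact this
    · simpa using isBigO_Wq hc0 (by omega)
  · have h0 : ∀ q, leadingWeight q d T = 0 := fun q =>
      leadingWeight_eq_zero q d T (by omega) (by omega)
    simpa [h0] using isBigO_Wq hc0 (by omega)

end Asymptotics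

section HurwitzSymmetry

variable {G : Type*} [Group G] {m : ℕ}

def conjSwap : (Fin (m + 2) → G) ≃ (Fin (m + 2) → G) where
  toFun h := Fin.cons (h 0 * h 1 * (h 0)⁻¹) (Fin.cons (h 0) (Fin.tail (Fin.tail h)))
  invFun g := Fin.cons (g 1) (Fin.cons ((g 1)⁻¹ * g 0 * g 1) (Fin.tail (Fin.tail g)))
  left_inv h := by
    ext i
    refine Fin.cases ?_ (Fin.cases ?_ fun i => ?_) i <;> simp [Fin.tail, mul_assoc]
  right_inv g := by
    ext i
    refine Fin.cases ?_ (Fin.cases ?_ fun i => ?_) i <;> simp [Fin.tail, mul_assoc]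

lemma prod_ofFn_conjSwap (h : Fin (m + 2) → G) :
    (List.ofFn (conjSwap h)).prod = (List.ofFn h).prod := by
  simp [conjSwap, List.ofFn_succ, Fin.tail, mul_assoc]

end HurwitzSymmetry

lemma Equiv.Perm.partition_conj {α : Type*} [Fintype α] [DecidableEq α] (σ τ : Equiv.Perm α) :
    (σ * τ * σ⁻¹).partition = τ.partition :=
  (Equiv.Perm.partition_eq_of_isConj.1 (isConj_iff.2 ⟨σ, rfl⟩)).symm

lemma Hur_cons_cons_comm {n m : ℕ} (A B : Nat.Partition n) (M : Fin m → Nat.Partition n) :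
    Hur (Fin.cons A (Fin.cons B M) : Fin (m + 2) → Nat.Partition n) =
      Hur (Fin.cons B (Fin.cons A M) : Fin (m + 2) → Nat.Partition n) := by
  unfold Hur
  congr 2
  refine Nat.card_congr (conjSwap.subtypeEquiv fun h => ?_)
  rw [prod_ofFn_conjSwap]
  refine and_congr_right fun _ => ?_
  simp only [Fin.forall_fin_succ (n := m + 1), Fin.forall_fin_succ (n := m)]
  simp [conjSwap, Fin.tail, Equiv.Perm.partition_conj]
  tauto

section Reindexing

variable {α : Type*} {n d : ℕ}

lemma snoc_snoc_of_fin_one (T : Fin 1 → α) (μ ν : α) :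
    Fin.snoc (Fin.snoc T μ) ν = ![T 0, μ, ν] := by
  funext i; fin_cases i <;> rfl

lemma snoc_snoc_of_fin_two (T : Fin 2 → α) (μ ν : α) :
    Fin.snoc (Fin.snoc T μ) ν = ![T 0, T 1, μ, ν] := by
  funext i; fin_cases i <;> rfl

lemma sum_Mset_one (hd : 1 ≤ d) (f : Nat.Partition n → ℝ) :
    ∑ T ∈ Mset n d 1, f (T 0) = ∑ P ∈ univ.filter (fun P : Nat.Partition n => colen P = d), f P := by
  refine sum_nbij' (fun T => T 0) (fun P _ => P) ?_ ?_ ?_ ?_ ?_ <;> intro T hT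
  · simp only [mem_Mset, Fin.sum_univ_one] at hT
    simp [hT.2]
  · simp only [mem_filter, mem_univ, true_and] at hT
    simp [mem_Mset, hT, hd]
  · funext i; fin_cases i; rfl
  all_goals rfl

lemma sum_Mset_two_filter (hd : 2 ≤ d) (f : Nat.Partition n → Nat.Partition n → ℝ) :
    ∑ T ∈ (Mset n d 2).filter (fun T => colen (T 0) = 1), f (T 0) (T 1) =
      ∑ P ∈ univ.filter (fun P : Nat.Partition n × Nat.Partition n =>
          colen P.1 = d - 1 ∧ colen P.2 = 1), f P.2 P.1 := by
  refine sum_nbij' (fun T => (T 1, T 0)) (fun P => ![P.2, P.1]) ?_ ?_ ?_ ?_ ?_ <;> intro T hT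
  · simp only [mem_filter, mem_Mset, Fin.sum_univ_two] at hT
    simp only [mem_filter, mem_univ, true_and]
    omega
  · simp only [mem_filter, mem_univ, true_and] at hT
    simp only [mem_filter, mem_Mset, Fin.forall_fin_two, Fin.sum_univ_two]
    simp [hT.1, hT.2]
    omega
  · funext i; fin_cases i <;> rfl
  all_goals rfl

end Reindexing

theorem sum_leadingWeight_mul_Hur {n d : ℕ} (hd : 2 ≤ d) (q : ℝ) (μ ν : Nat.Partition n) :
    ∑ k ∈ Icc 1 d, ∑ T ∈ Mset n d k,
        leadingWeight q d T * ((Hur (Fin.snoc (Fin.snoc T μ) ν) : ℚ) : ℝ) =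
      q ^ d * ∑ P ∈ univ.filter (fun P : Nat.Partition n => colen P = d),
          ((Hur ![P, μ, ν] : ℚ) : ℝ) +
        q ^ (d + 1) * ∑ P ∈ univ.filter (fun P : Nat.Partition n × Nat.Partition n =>
            colen P.1 = d - 1 ∧ colen P.2 = 1), ((Hur ![P.1, P.2, μ, ν] : ℚ) : ℝ) := by
  have hvanish : ∀ k ∈ Icc 1 d, k ∉ ({1, 2} : Finset ℕ) →
      ∑ T ∈ Mset n d k, leadingWeight q d T * ((Hur (Fin.snoc (Fin.snoc T μ) ν) : ℚ) : ℝ) = 0 := by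
    intro k _ hk
    simp only [mem_insert, mem_singleton, not_or] at hk
    exact sum_eq_zero fun T _ => by rw [leadingWeight_eq_zero q d T hk.1 hk.2, zero_mul]
  rw [← sum_subset (by intro k; simp; omega) hvanish, sum_pair (by norm_num), mul_sum, mul_sum]
  congr 1
  · rw [← sum_Mset_one (by omega)]
    exact sum_congr rfl fun T _ => by rw [snoc_snoc_of_fin_one]; rfl
  · rw [← sum_Mset_two_filter hd fun A B => q ^ (d + 1) * ((Hur ![B, A, μ, ν] : ℚ) : ℝ),
      sum_filter]
    refine sum_congr rfl fun T _ => ?_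
    have hswap : Hur ![T 0, T 1, μ, ν] = Hur ![T 1, T 0, μ, ν] := Hur_cons_cons_comm _ _ _
    rw [snoc_snoc_of_fin_two, hswap]
    change (if colen (T 0) = 1 then q ^ (d + 1) else 0) * _ = _
    split_ifs <;> simp

theorem zero_temp_stmt13_general (d n : ℕ) (hd : 2 ≤ d)
    (μ ν : Nat.Partition n) :
    ∃ C : ℝ, 0 < C ∧ ∃ δ ∈ Set.Ioo (0 : ℝ) 1, ∀ q ∈ Set.Ioo (0 : ℝ) δ,
      |Hdq q d μ ν
        - q ^ d * ∑ P ∈ Finset.univ.filter (fun P : Nat.Partition n => colen P = d),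
            ((Hur ![P, μ, ν] : ℚ) : ℝ)
        - q ^ (d + 1) * ∑ P ∈ Finset.univ.filter
            (fun P : Nat.Partition n × Nat.Partition n =>
              colen P.1 = d - 1 ∧ colen P.2 = 1),
            ((Hur ![P.1, P.2, μ, ν] : ℚ) : ℝ)| ≤ C * q ^ (d + 2) := by
  have hremainder : (fun q => ∑ k ∈ Icc 1 d, ∑ T ∈ Mset n d k,
      ((Hur (Fin.snoc (Fin.snoc T μ) ν) : ℚ) : ℝ) * (Wq q T - leadingWeight q d T))
        =O[𝓝[>] 0] fun q => q ^ (d + 2) := by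
    refine IsBigO.fun_sum fun k hk => ?_
    obtain ⟨k, rfl⟩ : ∃ k', k = k' + 1 := ⟨k - 1, by grind⟩
    exact IsBigO.fun_sum fun T hT => (isBigO_Wq_sub_leadingWeight hd hT).const_mul_left _
  refine exists_pos_bound_of_isBigO_nhdsGT (hremainder.congr_left fun q => ?_)
  rw [sub_sub, ← sum_leadingWeight_mul_Hur hd, Hdq, ← sum_sub_distrib]
  refine sum_congr rfl fun k _ => ?_
  rw [← sum_sub_distrib]
  exact sum_congr rfl fun T _ => by ring

/-- For `d ≥ 2`, `n ≥ 2d` and partitions `μ, ν` of `n`, there exist `C > 0`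
and `δ ∈ (0,1)` such that for all `q ∈ (0,δ)`:
`|H^d_q(μ,ν) - q^d Σ_{ℓ*(μ⁽¹⁾)=d} H(μ⁽¹⁾,μ,ν)
  - q^{d+1} Σ_{ℓ*(μ⁽¹⁾)=d-1, ℓ*(μ⁽²⁾)=1} H(μ⁽¹⁾,μ⁽²⁾,μ,ν)| ≤ C·q^{d+2}`. -/
theorem zero_temp_stmt13 (d n : ℕ) (hd : 2 ≤ d) (hn : 2 * d ≤ n)
    (μ ν : Nat.Partition n) :
    ∃ C : ℝ, 0 < C ∧ ∃ δ ∈ Set.Ioo (0 : ℝ) 1, ∀ q ∈ Set.Ioo (0 : ℝ) δ,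
      |Hdq q d μ ν
        - q ^ d * ∑ P ∈ Finset.univ.filter (fun P : Nat.Partition n => colen P = d),
            ((Hur ![P, μ, ν] : ℚ) : ℝ)
        - q ^ (d + 1) * ∑ P ∈ Finset.univ.filter
            (fun P : Nat.Partition n × Nat.Partition n =>
              colen P.1 = d - 1 ∧ colen P.2 = 1),
            ((Hur ![P.1, P.2, μ, ν] : ℚ) : ℝ)| ≤ C * q ^ (d + 2) :=
  zero_temp_stmt13_general d n hd μ ν
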